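/- arXiv:1009.0478 — 4 statements merged into one kernel-verified Lean document; each statement's English description precedes it below -/
import Mathlib

section
/- Let R be the local model algebra described in the context. Then the ℂ-algebra homomorphisms χ : R → ℂ with χ(t) = 0 are characterized as follows: every such χ satisfies (i) χ(s_a) = 0 for every a ∈ G with ℓ̃(a) > 0, and (ii) for all a, b ∈ G with ℓ̃(a) = ℓ̃(b) = 0 one has χ(s_a) ≠ 0 and χ(s_{a+b}) = ev₀(ε(a,b))·χ(s_a)·χ(s_b); conversely, every tuple (c_a)_{a∈G} of complex numbers satisfying (i) c_a = 0 whenever ℓ̃(a) > 0 and (ii) c_a ≠ 0 and c_{a+b} = ev₀(ε(a,b))·c_a·c_b whenever ℓ̃(a) = ℓ̃(b) = 0, arises as (χ(s_a))_{a∈G} for a unique ℂ-algebra homomorphism χ : R → ℂ with χ(t) = 0. -/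
open Polynomial

noncomputable section

/-- The prime ideal `(t) ⊆ ℂ[t]`. -/
abbrev Spr : Ideal (Polynomial ℂ) := Ideal.span {(X : Polynomial ℂ)}

instance : Spr.IsPrime :=
  (Ideal.span_singleton_prime Polynomial.X_ne_zero).mpr Polynomial.prime_X

/-- `S = ℂ[t]_(t)`, the localization of `ℂ[t]` at the prime ideal `(t)`. -/
abbrev Sloc := Localization.AtPrime Spr

instance SlocCommRing : CommRing Sloc := inferInstance
instance SlocCommSemiring : CommSemiring Sloc := SlocCommRing.toCommSemiring

/-- The element `t ∈ S`. -/
def tS : Sloc := algebraMap (Polynomial ℂ) Sloc X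

/-- The residue map `ev₀ : S → ℂ`, `t ↦ 0`. -/
def ev₀ : Sloc →+* ℂ :=
  IsLocalization.lift (M := Spr.primeCompl) (S := Sloc)
    (g := Polynomial.evalRingHom (0 : ℂ))
    (fun y => by
      have hy : (y : Polynomial ℂ) ∉ Spr := y.2
      rw [isUnit_iff_ne_zero]
      intro h0
      apply hy
      rw [Ideal.mem_span_singleton]
      refine Polynomial.X_dvd_iff.mpr ?_
      rw [Polynomial.coeff_zero_eq_eval_zero]
      simpa using h0)

/-- `λ(a,b) = ℓ̃(a) + ℓ̃(b) - ℓ̃(a+b)`, as a natural number. -/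
def lamNat {G : Type} [AddCommGroup G] (ℓ : G → ℚ) (a b : G) : ℕ :=
  (ℓ a + ℓ b - ℓ (a + b)).num.toNat

/-- The ideal of relations `s₀ - 1` and `t^{λ(a,b)}·s_{a+b} - ε(a,b)·s_a·s_b`. -/
def relIdeal (G : Type) [AddCommGroup G] (ℓ : G → ℚ) (ε : G → G → Slocˣ) :
    Ideal (MvPolynomial G Sloc) :=
  Ideal.span ({MvPolynomial.X 0 - 1} ∪
    Set.range (fun p : G × G =>
      MvPolynomial.C tS ^ lamNat ℓ p.1 p.2 * MvPolynomial.X (p.1 + p.2) -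
        MvPolynomial.C ((ε p.1 p.2 : Sloc)) * MvPolynomial.X p.1 * MvPolynomial.X p.2))

/-- The local model algebra `R = S[s_a : a ∈ G]/I`. -/
abbrev LocalModel (G : Type) [AddCommGroup G] (ℓ : G → ℚ) (ε : G → G → Slocˣ) :=
  MvPolynomial G Sloc ⧸ relIdeal G ℓ ε

/-- The image of the variable `s_a` in `R`. -/
def sVar {G : Type} [AddCommGroup G] (ℓ : G → ℚ) (ε : G → G → Slocˣ) (a : G) :
    LocalModel G ℓ ε :=
  Ideal.Quotient.mk (relIdeal G ℓ ε) (MvPolynomial.X a)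

/-- The image of `t` in `R`. -/
def tR {G : Type} [AddCommGroup G] (ℓ : G → ℚ) (ε : G → G → Slocˣ) :
    LocalModel G ℓ ε :=
  algebraMap Sloc (LocalModel G ℓ ε) tS

/-- `N`, the lcm of the denominators of the `ℓ̃(a)`. -/
def ramOrder (G : Type) [AddCommGroup G] [Fintype G] (ℓ : G → ℚ) : ℕ :=
  Finset.univ.lcm fun a : G => (ℓ a).den

/-! A `ℂ`-point of `R` over `t = 0` is the same as a tuple `c a = χ(s_a)` satisfying the relations
of `R` with `t ↦ 0`: `c 0 = 1` and `0 ^ λ(a,b) · c (a+b) = ev₀(ε(a,b)) · c a · c b`.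
If `c a ≠ 0 ≠ c b`, this forces `λ(a,b) = 0` and `c (a+b) ≠ 0`. Hence `c a ≠ 0` gives
`λ(a, n • a) = 0` for all `n`, i.e. `ℓ̃(n • a) = n ℓ̃(a)`, which stays in `[0,1)` only if
`ℓ̃(a) = 0`. On the subgroup `ℓ̃ = 0` every `λ` vanishes, so the relation is the twisted
multiplicativity (ii), and `c a · c (-a)` is a unit multiple of `c 0 = 1`. Conversely, (i) and
(ii) give the relations, because `λ(a,b) = 0` means `ℓ̃(a+b) = ℓ̃(a) + ℓ̃(b)`. -/

section Representative

variable {G : Type} [AddCommGroup G] {ℓ : G → ℚ}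

lemma Rat.eq_zero_of_den_eq_one_of_abs_lt_one {q : ℚ} (hq : q.den = 1) (h : |q| < 1) :
    q = 0 := by
  rw [← (Rat.den_eq_one_iff q).mp hq] at h ⊢
  exact_mod_cast Int.abs_lt_one_iff.mp (by exact_mod_cast h)

lemma lamNat_eq_zero_iff (hℓ_nonneg : ∀ a, 0 ≤ ℓ a) (hℓ_lt : ∀ a, ℓ a < 1)
    (hℓ_int : ∀ a b, (ℓ a + ℓ b - ℓ (a + b)).den = 1) {a b : G} :
    lamNat ℓ a b = 0 ↔ ℓ (a + b) = ℓ a + ℓ b := by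
  constructor
  · intro h
    have hle : ℓ a + ℓ b - ℓ (a + b) ≤ 0 :=
      Rat.num_nonpos.mp (Int.toNat_eq_zero.mp h)
    have := Rat.eq_zero_of_den_eq_one_of_abs_lt_one (hℓ_int a b)
      (abs_lt.mpr ⟨by linarith [hℓ_nonneg a, hℓ_nonneg b, hℓ_lt (a + b)], by linarith⟩)
    linarith
  · intro h
    simp [lamNat, h]

lemma rep_add_eq_zero (hℓ_nonneg : ∀ a, 0 ≤ ℓ a) (hℓ_lt : ∀ a, ℓ a < 1)
    (hℓ_int : ∀ a b, (ℓ a + ℓ b - ℓ (a + b)).den = 1) {a b : G} (ha : ℓ a = 0)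
    (hb : ℓ b = 0) : ℓ (a + b) = 0 := by
  have := Rat.eq_zero_of_den_eq_one_of_abs_lt_one (hℓ_int a b)
    (abs_lt.mpr ⟨by linarith [hℓ_lt (a + b)], by linarith [hℓ_nonneg (a + b)]⟩)
  linarith

lemma lamNat_eq_zero_of_eq_zero (hℓ_nonneg : ∀ a, 0 ≤ ℓ a) (hℓ_lt : ∀ a, ℓ a < 1)
    (hℓ_int : ∀ a b, (ℓ a + ℓ b - ℓ (a + b)).den = 1) {a b : G} (ha : ℓ a = 0)
    (hb : ℓ b = 0) : lamNat ℓ a b = 0 := by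
  rw [lamNat_eq_zero_iff hℓ_nonneg hℓ_lt hℓ_int, rep_add_eq_zero hℓ_nonneg hℓ_lt hℓ_int ha hb,
    ha, hb, add_zero]

lemma rep_neg_eq_zero (hℓ0 : ℓ 0 = 0) (hℓ_nonneg : ∀ a, 0 ≤ ℓ a) (hℓ_lt : ∀ a, ℓ a < 1)
    (hℓ_int : ∀ a b, (ℓ a + ℓ b - ℓ (a + b)).den = 1) {a : G} (ha : ℓ a = 0) :
    ℓ (-a) = 0 := by
  have := Rat.eq_zero_of_den_eq_one_of_abs_lt_one (hℓ_int a (-a))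
  rw [add_neg_cancel, hℓ0, ha, zero_add, sub_zero] at this
  exact this (abs_lt.mpr ⟨by linarith [hℓ_nonneg (-a)], hℓ_lt (-a)⟩)

lemma exists_lamNat_nsmul_ne_zero (hℓ0 : ℓ 0 = 0) (hℓ_nonneg : ∀ a, 0 ≤ ℓ a)
    (hℓ_lt : ∀ a, ℓ a < 1) (hℓ_int : ∀ a b, (ℓ a + ℓ b - ℓ (a + b)).den = 1) {a : G}
    (ha : 0 < ℓ a) : ∃ n : ℕ, lamNat ℓ a (n • a) ≠ 0 := by
  by_contra! h
  have hmul : ∀ n : ℕ, ℓ (n • a) = n * ℓ a := by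
    intro n
    induction n with
    | zero => simp [hℓ0]
    | succ n ih =>
      rw [succ_nsmul', (lamNat_eq_zero_iff hℓ_nonneg hℓ_lt hℓ_int).mp (h n), ih]
      push_cast
      ring
  obtain ⟨n, hn⟩ := exists_nat_gt (1 / ℓ a)
  have := hℓ_lt (n • a)
  rw [hmul, ← lt_div_iff₀ ha] at this
  linarith

end Representative

lemma ev₀_algebraMap (z : ℂ) : ev₀ (algebraMap ℂ Sloc z) = z := by
  rw [IsScalarTower.algebraMap_apply ℂ (Polynomial ℂ) Sloc, ev₀, IsLocalization.lift_eq]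
  simp

lemma ev₀_tS : ev₀ tS = 0 := by
  rw [tS, ev₀, IsLocalization.lift_eq]
  simp

lemma algHom_eq_ev₀ (φ : Sloc →ₐ[ℂ] ℂ) (hφ : φ tS = 0) : (φ : Sloc →+* ℂ) = ev₀ := by
  apply IsLocalization.ringHom_ext Spr.primeCompl
  rw [ev₀, IsLocalization.lift_comp]
  have : φ.comp (IsScalarTower.toAlgHom ℂ ℂ[X] Sloc) = Polynomial.aeval 0 :=
    Polynomial.algHom_ext (by simpa [tS] using hφ)
  exact congrArg AlgHom.toRingHom this

section LocalModel

variable {G : Type} [AddCommGroup G] {ℓ : G → ℚ} {ε : G → G → Slocˣ}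

lemma algebraMap_localModel_eq_mk (u : Sloc) :
    algebraMap Sloc (LocalModel G ℓ ε) u = Ideal.Quotient.mk _ (MvPolynomial.C u) := rfl

lemma sVar_zero : sVar ℓ ε 0 = 1 := by
  rw [sVar, ← map_one (Ideal.Quotient.mk _), Ideal.Quotient.eq]
  exact Ideal.subset_span (Or.inl rfl)

lemma tR_pow_mul_sVar_add (a b : G) :
    tR ℓ ε ^ lamNat ℓ a b * sVar ℓ ε (a + b) =
      algebraMap Sloc _ (ε a b : Sloc) * sVar ℓ ε a * sVar ℓ ε b := by
  simp only [tR, sVar, algebraMap_localModel_eq_mk, ← map_pow, ← map_mul, Ideal.Quotient.eq]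
  exact Ideal.subset_span (Or.inr ⟨(a, b), by simp⟩)

lemma LocalModel.algHom_algebraMap (χ : LocalModel G ℓ ε →ₐ[ℂ] ℂ) (hχ : χ (tR ℓ ε) = 0)
    (u : Sloc) : χ (algebraMap Sloc _ u) = ev₀ u :=
  RingHom.congr_fun (algHom_eq_ev₀ (χ.comp (IsScalarTower.toAlgHom ℂ Sloc _)) hχ) u

lemma LocalModel.algHom_ext {χ χ' : LocalModel G ℓ ε →ₐ[ℂ] ℂ} (hχ : χ (tR ℓ ε) = 0)
    (hχ' : χ' (tR ℓ ε) = 0) (h : ∀ a, χ (sVar ℓ ε a) = χ' (sVar ℓ ε a)) : χ = χ' := by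
  apply AlgHom.coe_ringHom_injective
  apply Ideal.Quotient.ringHom_ext
  apply MvPolynomial.ringHom_ext
  · intro u
    exact (LocalModel.algHom_algebraMap χ hχ u).trans (LocalModel.algHom_algebraMap χ' hχ' u).symm
  · exact h

end LocalModel

section PointOverZero

variable {G : Type} [AddCommGroup G] {ℓ : G → ℚ} {ε : G → G → Slocˣ}

/-- The relations of `R` at `t = 0`, for values `c a` of the `s_a`. -/
structure IsPointOverZero (ℓ : G → ℚ) (ε : G → G → Slocˣ) (c : G → ℂ) : Prop where
  map_zero : c 0 = 1
  zero_pow_mul_map_add : ∀ a b, (0 : ℂ) ^ lamNat ℓ a b * c (a + b) = ev₀ (ε a b) * c a * c b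

lemma IsPointOverZero.of_algHom (χ : LocalModel G ℓ ε →ₐ[ℂ] ℂ) (hχ : χ (tR ℓ ε) = 0) :
    IsPointOverZero ℓ ε fun a => χ (sVar ℓ ε a) where
  map_zero := by rw [sVar_zero, map_one]
  zero_pow_mul_map_add a b := by
    simpa only [map_mul, map_pow, hχ, LocalModel.algHom_algebraMap χ hχ] using
      congrArg χ (tR_pow_mul_sVar_add a b)

namespace IsPointOverZero

variable {c : G → ℂ}

lemma relIdeal_le_ker (hc : IsPointOverZero ℓ ε c) :
    relIdeal G ℓ ε ≤ RingHom.ker (MvPolynomial.eval₂Hom ev₀ c) := by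
  rw [relIdeal, Ideal.span_le]
  rintro _ (rfl | ⟨⟨a, b⟩, rfl⟩)
  · simp [hc.map_zero]
  · simpa [ev₀_tS, sub_eq_zero] using hc.zero_pow_mul_map_add a b

def toAlgHom (hc : IsPointOverZero ℓ ε c) : LocalModel G ℓ ε →ₐ[ℂ] ℂ where
  toRingHom := Ideal.Quotient.lift _ (MvPolynomial.eval₂Hom ev₀ c) fun _ hx =>
    RingHom.mem_ker.mp (hc.relIdeal_le_ker hx)
  commutes' z := by
    rw [IsScalarTower.algebraMap_apply ℂ Sloc (LocalModel G ℓ ε), algebraMap_localModel_eq_mk]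
    exact (Ideal.Quotient.lift_mk _ _ _).trans
      ((MvPolynomial.eval₂Hom_C _ _ _).trans (ev₀_algebraMap z))

lemma toAlgHom_mk (hc : IsPointOverZero ℓ ε c) (p : MvPolynomial G Sloc) :
    hc.toAlgHom (Ideal.Quotient.mk _ p) = MvPolynomial.eval₂Hom ev₀ c p :=
  Ideal.Quotient.lift_mk _ _ _

lemma toAlgHom_tR (hc : IsPointOverZero ℓ ε c) : hc.toAlgHom (tR ℓ ε) = 0 := by
  rw [tR, algebraMap_localModel_eq_mk, toAlgHom_mk, MvPolynomial.eval₂Hom_C, ev₀_tS]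

lemma toAlgHom_sVar (hc : IsPointOverZero ℓ ε c) (a : G) : hc.toAlgHom (sVar ℓ ε a) = c a := by
  rw [sVar, toAlgHom_mk, MvPolynomial.eval₂Hom_X']

lemma lamNat_eq_zero_and_ne_zero (hc : IsPointOverZero ℓ ε c) {a b : G} (ha : c a ≠ 0)
    (hb : c b ≠ 0) : lamNat ℓ a b = 0 ∧ c (a + b) ≠ 0 := by
  have hrhs : ev₀ (ε a b) * c a * c b ≠ 0 :=
    mul_ne_zero (mul_ne_zero ((ε a b).isUnit.map ev₀).ne_zero ha) hb
  rw [← hc.zero_pow_mul_map_add, mul_ne_zero_iff, Ne, zero_pow_eq_zero, not_not] at hrhs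
  exact hrhs

lemma nsmul_ne_zero (hc : IsPointOverZero ℓ ε c) {a : G} (ha : c a ≠ 0) (n : ℕ) :
    c (n • a) ≠ 0 := by
  induction n with
  | zero => simp [hc.map_zero]
  | succ n ih => simpa [succ_nsmul'] using (hc.lamNat_eq_zero_and_ne_zero ha ih).2

lemma eq_zero_of_pos (hc : IsPointOverZero ℓ ε c) (hℓ0 : ℓ 0 = 0) (hℓ_nonneg : ∀ a, 0 ≤ ℓ a)
    (hℓ_lt : ∀ a, ℓ a < 1) (hℓ_int : ∀ a b, (ℓ a + ℓ b - ℓ (a + b)).den = 1) {a : G}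
    (ha : 0 < ℓ a) : c a = 0 := by
  by_contra hca
  obtain ⟨n, hn⟩ := exists_lamNat_nsmul_ne_zero hℓ0 hℓ_nonneg hℓ_lt hℓ_int ha
  exact hn (hc.lamNat_eq_zero_and_ne_zero hca (hc.nsmul_ne_zero hca n)).1

lemma map_add_of_eq_zero (hc : IsPointOverZero ℓ ε c) (hℓ_nonneg : ∀ a, 0 ≤ ℓ a)
    (hℓ_lt : ∀ a, ℓ a < 1) (hℓ_int : ∀ a b, (ℓ a + ℓ b - ℓ (a + b)).den = 1) {a b : G}
    (ha : ℓ a = 0) (hb : ℓ b = 0) : c (a + b) = ev₀ (ε a b) * c a * c b := by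
  simpa [lamNat_eq_zero_of_eq_zero hℓ_nonneg hℓ_lt hℓ_int ha hb] using
    hc.zero_pow_mul_map_add a b

lemma ne_zero_of_eq_zero (hc : IsPointOverZero ℓ ε c) (hℓ0 : ℓ 0 = 0) (hℓ_nonneg : ∀ a, 0 ≤ ℓ a)
    (hℓ_lt : ∀ a, ℓ a < 1) (hℓ_int : ∀ a b, (ℓ a + ℓ b - ℓ (a + b)).den = 1) {a : G}
    (ha : ℓ a = 0) : c a ≠ 0 := by
  intro hca
  have := hc.map_add_of_eq_zero hℓ_nonneg hℓ_lt hℓ_int ha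
    (rep_neg_eq_zero hℓ0 hℓ_nonneg hℓ_lt hℓ_int ha)
  simp [hca, hc.map_zero] at this

lemma of_forall_pos_of_forall_eq_zero (hℓ0 : ℓ 0 = 0) (hℓ_nonneg : ∀ a, 0 ≤ ℓ a)
    (hℓ_lt : ∀ a, ℓ a < 1) (hℓ_int : ∀ a b, (ℓ a + ℓ b - ℓ (a + b)).den = 1)
    (hε : ε 0 0 = 1) (hpos : ∀ a, 0 < ℓ a → c a = 0)
    (hzero : ∀ a b, ℓ a = 0 → ℓ b = 0 → c a ≠ 0 ∧ c (a + b) = ev₀ (ε a b) * c a * c b) :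
    IsPointOverZero ℓ ε c where
  map_zero := by
    obtain ⟨hc0, hmul⟩ := hzero 0 0 hℓ0 hℓ0
    rw [add_zero, hε, Units.val_one, map_one, one_mul] at hmul
    exact mul_left_cancel₀ hc0 (by rw [mul_one, ← hmul])
  zero_pow_mul_map_add a b := by
    by_cases hab : ℓ a = 0 ∧ ℓ b = 0
    · rw [lamNat_eq_zero_of_eq_zero hℓ_nonneg hℓ_lt hℓ_int hab.1 hab.2, pow_zero, one_mul]
      exact (hzero a b hab.1 hab.2).2
    have hpos_or : 0 < ℓ a ∨ 0 < ℓ b := by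
      by_contra! h
      exact hab ⟨le_antisymm h.1 (hℓ_nonneg a), le_antisymm h.2 (hℓ_nonneg b)⟩
    have hrhs : ev₀ (ε a b) * c a * c b = 0 := by
      rcases hpos_or with h | h <;> simp [hpos _ h]
    rw [hrhs]
    rcases Nat.eq_zero_or_pos (lamNat ℓ a b) with hlam | hlam
    · rw [hlam, pow_zero, one_mul]
      apply hpos
      rw [(lamNat_eq_zero_iff hℓ_nonneg hℓ_lt hℓ_int).mp hlam]
      rcases hpos_or with h | h <;> linarith [hℓ_nonneg a, hℓ_nonneg b]
    · rw [zero_pow hlam.ne', zero_mul]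

end IsPointOverZero

end PointOverZero

theorem localModel_points_over_zero_characterization_general
    (G : Type) [AddCommGroup G]
    (ℓ : G → ℚ) (hℓ0 : ℓ 0 = 0) (hℓ_nonneg : ∀ a, 0 ≤ ℓ a) (hℓ_lt : ∀ a, ℓ a < 1)
    (hℓ_int : ∀ a b, (ℓ a + ℓ b - ℓ (a + b)).den = 1)
    (ε : G → G → Slocˣ)
    (hε_one : ∀ a, ε a 0 = 1) :
    (∀ χ : LocalModel G ℓ ε →ₐ[ℂ] ℂ, χ (tR ℓ ε) = 0 →
      (∀ a : G, 0 < ℓ a → χ (sVar ℓ ε a) = 0) ∧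
      (∀ a b : G, ℓ a = 0 → ℓ b = 0 →
        χ (sVar ℓ ε a) ≠ 0 ∧
        χ (sVar ℓ ε (a + b)) = ev₀ (ε a b) * χ (sVar ℓ ε a) * χ (sVar ℓ ε b))) ∧
    (∀ c : G → ℂ,
      (∀ a : G, 0 < ℓ a → c a = 0) →
      (∀ a b : G, ℓ a = 0 → ℓ b = 0 → c a ≠ 0 ∧ c (a + b) = ev₀ (ε a b) * c a * c b) →
      ∃! χ : LocalModel G ℓ ε →ₐ[ℂ] ℂ,
        χ (tR ℓ ε) = 0 ∧ ∀ a : G, χ (sVar ℓ ε a) = c a) := by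
  refine ⟨fun χ hχ => ?_, fun c hpos hzero => ?_⟩
  · have hc := IsPointOverZero.of_algHom χ hχ
    exact ⟨fun a ha => hc.eq_zero_of_pos hℓ0 hℓ_nonneg hℓ_lt hℓ_int ha,
      fun a b ha hb => ⟨hc.ne_zero_of_eq_zero hℓ0 hℓ_nonneg hℓ_lt hℓ_int ha,
        hc.map_add_of_eq_zero hℓ_nonneg hℓ_lt hℓ_int ha hb⟩⟩
  · have hc : IsPointOverZero ℓ ε c :=
      .of_forall_pos_of_forall_eq_zero hℓ0 hℓ_nonneg hℓ_lt hℓ_int (hε_one 0) hpos hzero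
    refine ⟨hc.toAlgHom, ⟨hc.toAlgHom_tR, hc.toAlgHom_sVar⟩, fun χ ⟨hχ, hχc⟩ => ?_⟩
    exact LocalModel.algHom_ext hχ hc.toAlgHom_tR fun a => (hχc a).trans (hc.toAlgHom_sVar a).symm

/-- Characterization of the `ℂ`-algebra homomorphisms `χ : R → ℂ` with
`χ(t) = 0`: every such `χ` satisfies (i) `χ(s_a) = 0` for `ℓ̃(a) > 0` and (ii) for
`ℓ̃(a) = ℓ̃(b) = 0` one has `χ(s_a) ≠ 0` and `χ(s_{a+b}) = ev₀(ε(a,b))·χ(s_a)·χ(s_b)`;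
conversely every tuple `(c_a)` satisfying (i) and (ii) arises from a unique such `χ`. -/
theorem localModel_points_over_zero_characterization
    (G : Type) [AddCommGroup G] [Fintype G]
    (ℓ : G → ℚ) (hℓ0 : ℓ 0 = 0) (hℓ_nonneg : ∀ a, 0 ≤ ℓ a) (hℓ_lt : ∀ a, ℓ a < 1)
    (hℓ_int : ∀ a b, (ℓ a + ℓ b - ℓ (a + b)).den = 1)
    (ε : G → G → Slocˣ)
    (hε_symm : ∀ a b, ε a b = ε b a)
    (hε_one : ∀ a, ε a 0 = 1)
    (hε_coc : ∀ a b c, ε a b * ε (a + b) c = ε a (b + c) * ε b c) :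
    (∀ χ : LocalModel G ℓ ε →ₐ[ℂ] ℂ, χ (tR ℓ ε) = 0 →
      (∀ a : G, 0 < ℓ a → χ (sVar ℓ ε a) = 0) ∧
      (∀ a b : G, ℓ a = 0 → ℓ b = 0 →
        χ (sVar ℓ ε a) ≠ 0 ∧
        χ (sVar ℓ ε (a + b)) = ev₀ (ε a b) * χ (sVar ℓ ε a) * χ (sVar ℓ ε b))) ∧
    (∀ c : G → ℂ,
      (∀ a : G, 0 < ℓ a → c a = 0) →
      (∀ a b : G, ℓ a = 0 → ℓ b = 0 → c a ≠ 0 ∧ c (a + b) = ev₀ (ε a b) * c a * c b) →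
      ∃! χ : LocalModel G ℓ ε →ₐ[ℂ] ℂ,
        χ (tR ℓ ε) = 0 ∧ ∀ a : G, χ (sVar ℓ ε a) = c a) :=
  localModel_points_over_zero_characterization_general G ℓ hℓ0 hℓ_nonneg hℓ_lt hℓ_int ε hε_one
end
end

section
/- Let R be the local model algebra described in the context. Then R is a free S-module of rank equal to the order of G; more precisely, the images in R of the variables s_a, for a ∈ G (with s_0 = 1), form a basis of R as an S-module. -/
open Polynomial

noncomputable section

/-!
The defining relations rewrite every monomial in the `s_a` as an `S`-multiple of a single
`s_a`, so the `s_a` span `R`. For independence, let `R` act on the free module with basis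
`(e_b)_{b ∈ G}` by `s_a · e_b = ε(a,b)⁻¹ t^{λ(a,b)} e_{a+b}`: since `ε` and `λ` are normalized
symmetric 2-cocycles (`λ` being the coboundary of `ℓ̃`), these operators commute and satisfy the
defining relations, and `s_a` sends `e_0` to `e_a`.
-/

structure IsSymmCocycle {G M : Type*} [AddCommGroup G] [CommMonoid M] (c : G → G → M) :
    Prop where
  map_zero_right : ∀ a, c a 0 = 1
  comm : ∀ a b, c a b = c b a
  cocycle : ∀ a b d, c a b * c (a + b) d = c a (b + d) * c b d

namespace IsSymmCocycle

variable {G M N : Type*} [AddCommGroup G]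

section CommMonoid

variable [CommMonoid M] [CommMonoid N] {c d : G → G → M}

lemma map_zero_left (hc : IsSymmCocycle c) (a : G) : c 0 a = 1 := by
  rw [hc.comm, hc.map_zero_right]

lemma mul (hc : IsSymmCocycle c) (hd : IsSymmCocycle d) :
    IsSymmCocycle fun a b => c a b * d a b where
  map_zero_right a := by rw [hc.map_zero_right, hd.map_zero_right, one_mul]
  comm a b := by rw [hc.comm, hd.comm]
  cocycle a b e := by
    calc c a b * d a b * (c (a + b) e * d (a + b) e)
        = c a b * c (a + b) e * (d a b * d (a + b) e) := by ac_rfl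
      _ = c a (b + e) * c b e * (d a (b + e) * d b e) := by rw [hc.cocycle, hd.cocycle]
      _ = c a (b + e) * d a (b + e) * (c b e * d b e) := by ac_rfl

lemma map (hc : IsSymmCocycle c) (f : M →* N) : IsSymmCocycle fun a b => f (c a b) where
  map_zero_right a := by rw [hc.map_zero_right, map_one]
  comm a b := by rw [hc.comm]
  cocycle a b e := by rw [← map_mul, hc.cocycle, map_mul]

end CommMonoid

lemma inv [CommGroup M] {c : G → G → M} (hc : IsSymmCocycle c) :
    IsSymmCocycle fun a b => (c a b)⁻¹ :=
  hc.map (MonoidHom.id M)⁻¹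

end IsSymmCocycle

lemma isSymmCocycle_pow_of_coboundary {G M : Type*} [AddCommGroup G] [CommMonoid M] (x : M)
    {ℓ : G → ℚ} (hℓ0 : ℓ 0 = 0) {n : G → G → ℕ}
    (hn : ∀ a b, (n a b : ℚ) = ℓ a + ℓ b - ℓ (a + b)) :
    IsSymmCocycle fun a b => x ^ n a b where
  map_zero_right a := by
    have : (n a 0 : ℚ) = 0 := by rw [hn, add_zero, hℓ0, add_zero, sub_self]
    rw [Nat.cast_eq_zero.mp this, pow_zero]
  comm a b := by
    have : (n a b : ℚ) = n b a := by rw [hn, hn, add_comm (ℓ a), add_comm a]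
    rw [Nat.cast_injective this]
  cocycle a b d := by
    have : ((n a b + n (a + b) d : ℕ) : ℚ) = (n a (b + d) + n b d : ℕ) := by
      push_cast [hn]
      rw [add_assoc]
      ring
    rw [← pow_add, ← pow_add, Nat.cast_injective this]

lemma cast_lamNat {G : Type} [AddCommGroup G] {ℓ : G → ℚ} (hℓ_nonneg : ∀ a, 0 ≤ ℓ a)
    (hℓ_lt : ∀ a, ℓ a < 1) (hℓ_int : ∀ a b, (ℓ a + ℓ b - ℓ (a + b)).den = 1) (a b : G) :
    (lamNat ℓ a b : ℚ) = ℓ a + ℓ b - ℓ (a + b) := by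
  set q := ℓ a + ℓ b - ℓ (a + b) with hq
  have hq_num : (q.num : ℚ) = q := (Rat.den_eq_one_iff q).mp (hℓ_int a b)
  have hnum_gt : (-1 : ℚ) < q.num := by
    linarith [hℓ_nonneg a, hℓ_nonneg b, hℓ_lt (a + b)]
  have hnum_nonneg : 0 ≤ q.num := by
    have : (-1 : ℤ) < q.num := by exact_mod_cast hnum_gt
    omega
  rw [lamNat, ← hq, ← hq_num]
  exact_mod_cast Int.toNat_of_nonneg hnum_nonneg

section TwistedShift

variable {S G : Type*} [CommRing S] [AddCommGroup G] {c : G → G → S}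

/-- Multiplication by `e_a` in the twisted group algebra `⊕_b S e_b`, `e_a e_b = c a b • e_{a+b}`,
written on coefficient functions. -/
def twistShift (c : G → G → S) (a : G) : Module.End S (G → S) :=
  LinearMap.pi fun x => c a (x - a) • LinearMap.proj (x - a)

@[simp]
lemma twistShift_apply (a : G) (f : G → S) (x : G) :
    twistShift c a f x = c a (x - a) * f (x - a) :=
  rfl

lemma twistShift_zero (hc : IsSymmCocycle c) : twistShift c 0 = 1 := by
  ext f x
  simp [hc.map_zero_left]

lemma twistShift_mul (hc : IsSymmCocycle c) (a b : G) :
    twistShift c a * twistShift c b = c a b • twistShift c (a + b) := by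
  ext f x
  have key := hc.cocycle a b (x - (a + b))
  rw [show b + (x - (a + b)) = x - a by abel] at key
  simp only [Module.End.mul_apply, twistShift_apply, LinearMap.smul_apply, Pi.smul_apply,
    smul_eq_mul, sub_sub]
  linear_combination (-f (x - (a + b))) * key

lemma twistShift_commute (hc : IsSymmCocycle c) (a b : G) :
    Commute (twistShift c a) (twistShift c b) := by
  rw [Commute, SemiconjBy, twistShift_mul hc, twistShift_mul hc, hc.comm, add_comm]

lemma twistShift_single_zero [DecidableEq G] (hc : IsSymmCocycle c) (a : G) :
    twistShift c a (Pi.single 0 1) = Pi.single a 1 := by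
  ext x
  by_cases hx : x = a
  · subst hx
    simp [hc.map_zero_right]
  · simp [sub_eq_zero, hx]

end TwistedShift

section TwistIdeal

variable {S G : Type*} [CommRing S] [AddCommGroup G] {c : G → G → S}

def twistIdeal (c : G → G → S) : Ideal (MvPolynomial G S) :=
  Ideal.span ({MvPolynomial.X 0 - 1} ∪ Set.range fun p : G × G =>
    MvPolynomial.X p.1 * MvPolynomial.X p.2 -
      MvPolynomial.C (c p.1 p.2) * MvPolynomial.X (p.1 + p.2))

lemma X_zero_sub_one_mem_twistIdeal : MvPolynomial.X 0 - 1 ∈ twistIdeal c :=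
  Ideal.subset_span (Or.inl rfl)

lemma X_mul_X_sub_mem_twistIdeal (a b : G) :
    MvPolynomial.X a * MvPolynomial.X b - MvPolynomial.C (c a b) * MvPolynomial.X (a + b) ∈
      twistIdeal c :=
  Ideal.subset_span (Or.inr ⟨(a, b), rfl⟩)

variable {I : Ideal (MvPolynomial G S)}

lemma span_range_mk_X_eq_top (hI : twistIdeal c ≤ I) :
    Submodule.span S (Set.range fun a => Ideal.Quotient.mk I (MvPolynomial.X a)) = ⊤ := by
  set s := fun a => Ideal.Quotient.mk I (MvPolynomial.X a)
  have hs_zero : s 0 = 1 := by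
    rw [← map_one (Ideal.Quotient.mk I)]
    exact Ideal.Quotient.eq.mpr (hI X_zero_sub_one_mem_twistIdeal)
  have hs_mul (a b : G) : s a * s b = c a b • s (a + b) := by
    simp only [s]
    rw [← Ideal.Quotient.mkₐ_eq_mk S, ← map_mul, ← map_smul, MvPolynomial.smul_eq_C_mul]
    exact Ideal.Quotient.eq.mpr (hI (X_mul_X_sub_mem_twistIdeal a b))
  have hmul_s (a : G) {z} (hz : z ∈ Submodule.span S (Set.range s)) :
      z * s a ∈ Submodule.span S (Set.range s) := by
    induction hz using Submodule.span_induction with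
    | mem w hw =>
      obtain ⟨b, rfl⟩ := hw
      rw [hs_mul]
      exact Submodule.smul_mem _ _ (Submodule.subset_span ⟨b + a, rfl⟩)
    | zero => simp
    | add u v _ _ hu hv => rw [add_mul]; exact add_mem hu hv
    | smul r u _ hu => rw [smul_mul_assoc]; exact Submodule.smul_mem _ r hu
  refine Submodule.eq_top_iff'.mpr fun z => ?_
  obtain ⟨p, rfl⟩ := Ideal.Quotient.mk_surjective z
  induction p using MvPolynomial.induction_on with
  | C r =>
    rw [← Ideal.Quotient.mkₐ_eq_mk S, MvPolynomial.C_eq_smul_one, map_smul, map_one, ← hs_zero]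
    exact Submodule.smul_mem _ r (Submodule.subset_span ⟨0, rfl⟩)
  | add p q hp hq => rw [map_add]; exact add_mem hp hq
  | mul_X p a hp => rw [map_mul]; exact hmul_s a hp

open scoped IsMulCommutative in
lemma linearIndependent_mk_X (hc : IsSymmCocycle c) (hI : I ≤ twistIdeal c) :
    LinearIndependent S fun a => Ideal.Quotient.mk I (MvPolynomial.X a) := by
  classical
  set A := Algebra.adjoin S (Set.range (twistShift c))
  have : IsMulCommutative A := Algebra.isMulCommutative_adjoin S <| by
    rintro _ ⟨a, rfl⟩ _ ⟨b, rfl⟩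
    exact twistShift_commute hc a b
  let φ : MvPolynomial G S →ₐ[S] A :=
    MvPolynomial.aeval fun a => ⟨twistShift c a, Algebra.subset_adjoin ⟨a, rfl⟩⟩
  have hφ : I ≤ RingHom.ker φ := by
    refine hI.trans (Ideal.span_le.mpr ?_)
    rintro _ (rfl | ⟨⟨a, b⟩, rfl⟩) <;> refine RingHom.mem_ker.mpr (Subtype.ext ?_)
    · simp [φ, twistShift_zero hc]
    · simp [φ, twistShift_mul hc, Algebra.smul_def]
  let ψ : (MvPolynomial G S ⧸ I) →ₗ[S] G → S :=
    LinearMap.applyₗ (Pi.single 0 1) ∘ₗ A.val.toLinearMap ∘ₗ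
      (Ideal.Quotient.liftₐ I φ fun p hp => hφ hp).toLinearMap
  refine LinearIndependent.of_comp ψ ?_
  convert Pi.linearIndependent_single_one G S with a
  change (φ (MvPolynomial.X a) : Module.End S (G → S)) (Pi.single 0 1) = Pi.single a 1
  rw [MvPolynomial.aeval_X]
  exact twistShift_single_zero hc a

theorem exists_basis_mk_X_of_eq_twistIdeal (hc : IsSymmCocycle c) (hI : I = twistIdeal c) :
    ∃ b : Module.Basis G S (MvPolynomial G S ⧸ I),
      ∀ a, b a = Ideal.Quotient.mk I (MvPolynomial.X a) :=
  ⟨.mk (linearIndependent_mk_X hc hI.le) (span_range_mk_X_eq_top hI.ge).ge, fun _ => by simp⟩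

end TwistIdeal

lemma relIdeal_eq_twistIdeal {G : Type} [AddCommGroup G] (ℓ : G → ℚ) (ε : G → G → Slocˣ) :
    relIdeal G ℓ ε = twistIdeal fun a b => ((ε a b)⁻¹ : Slocˣ) * tS ^ lamNat ℓ a b := by
  have hunit (a b : G) : (MvPolynomial.C (ε a b : Sloc) : MvPolynomial G Sloc) *
      MvPolynomial.C (((ε a b)⁻¹ : Slocˣ) : Sloc) = 1 := by
    rw [← map_mul, Units.mul_inv, map_one]
  refine le_antisymm (Ideal.span_le.mpr ?_) (Ideal.span_le.mpr ?_)
  · rintro _ (rfl | ⟨⟨a, b⟩, rfl⟩)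
    · exact X_zero_sub_one_mem_twistIdeal
    · rw [SetLike.mem_coe]
      convert Ideal.mul_mem_left _ (-MvPolynomial.C (ε a b : Sloc))
        (X_mul_X_sub_mem_twistIdeal a b) using 1
      simp only [map_mul, map_pow]
      linear_combination (-MvPolynomial.C tS ^ lamNat ℓ a b * MvPolynomial.X (a + b)) * hunit a b
  · rintro _ (rfl | ⟨⟨a, b⟩, rfl⟩)
    · exact Ideal.subset_span (Or.inl rfl)
    · rw [SetLike.mem_coe]
      convert Ideal.mul_mem_left _ (-MvPolynomial.C (((ε a b)⁻¹ : Slocˣ) : Sloc))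
        (show _ ∈ relIdeal G ℓ ε from Ideal.subset_span (Or.inr ⟨(a, b), rfl⟩)) using 1
      simp only [map_mul, map_pow]
      linear_combination (-MvPolynomial.X a * MvPolynomial.X b) * hunit a b

theorem localModel_sVar_basis_general
    (G : Type) [AddCommGroup G]
    (ℓ : G → ℚ) (hℓ0 : ℓ 0 = 0) (hℓ_nonneg : ∀ a, 0 ≤ ℓ a) (hℓ_lt : ∀ a, ℓ a < 1)
    (hℓ_int : ∀ a b, (ℓ a + ℓ b - ℓ (a + b)).den = 1)
    (ε : G → G → Slocˣ)
    (hε_symm : ∀ a b, ε a b = ε b a)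
    (hε_one : ∀ a, ε a 0 = 1)
    (hε_coc : ∀ a b c, ε a b * ε (a + b) c = ε a (b + c) * ε b c) :
    ∃ b : Module.Basis G Sloc (LocalModel G ℓ ε), ∀ a : G, b a = sVar ℓ ε a := by
  have hε : IsSymmCocycle ε := ⟨hε_one, hε_symm, hε_coc⟩
  have hlam : IsSymmCocycle fun a b => tS ^ lamNat ℓ a b :=
    isSymmCocycle_pow_of_coboundary tS hℓ0 (cast_lamNat hℓ_nonneg hℓ_lt hℓ_int)
  exact exists_basis_mk_X_of_eq_twistIdeal ((hε.inv.map (Units.coeHom Sloc)).mul hlam)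
    (relIdeal_eq_twistIdeal ℓ ε)

/-- The local model `R` is a free `S`-module of rank `|G|`: the images of
the variables `s_a` (`a ∈ G`, with `s_0 = 1`) form a basis of `R` as an `S`-module. -/
theorem localModel_sVar_basis
    (G : Type) [AddCommGroup G] [Fintype G]
    (ℓ : G → ℚ) (hℓ0 : ℓ 0 = 0) (hℓ_nonneg : ∀ a, 0 ≤ ℓ a) (hℓ_lt : ∀ a, ℓ a < 1)
    (hℓ_int : ∀ a b, (ℓ a + ℓ b - ℓ (a + b)).den = 1)
    (ε : G → G → Slocˣ)
    (hε_symm : ∀ a b, ε a b = ε b a)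
    (hε_one : ∀ a, ε a 0 = 1)
    (hε_coc : ∀ a b c, ε a b * ε (a + b) c = ε a (b + c) * ε b c) :
    ∃ b : Module.Basis G Sloc (LocalModel G ℓ ε), ∀ a : G, b a = sVar ℓ ε a :=
  localModel_sVar_basis_general G ℓ hℓ0 hℓ_nonneg hℓ_lt hℓ_int ε hε_symm hε_one hε_coc
end
end

section
/- Let G be a finite abelian group, written additively, let K = ℂ(t) be the field of rational functions in one variable over ℂ, and let f : G × G → Kˣ be a function such that for all a, b, c ∈ G the element s(a,b,c) := f(b,c)·f(a+b,c)⁻¹·f(a,b+c)·f(a,b)⁻¹ is a nonzero constant, i.e. lies in ℂˣ ⊆ Kˣ. Then there exist constants s(a,b) ∈ ℂˣ such that the rescaled functions g(a,b) := f(a,b)·s(a,b)⁻¹ satisfy the 2-cocycle condition g(a,b)·g(a+b,c) = g(a,b+c)·g(b,c) for all a, b, c ∈ G. -/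
noncomputable section

/-- The inclusion `ℂˣ ⊆ ℂ(t)ˣ` of the nonzero constants into the nonzero rational
functions in one variable over `ℂ`. -/
def constUnits : ℂˣ →* (RatFunc ℂ)ˣ :=
  Units.map (algebraMap ℂ (RatFunc ℂ)).toMonoidHom

/-- Every nonzero complex number has `n`-th roots for every nonzero integer `n`, as a unit. -/
lemma exists_zpow_eq (c : ℂˣ) {n : ℤ} (hn : n ≠ 0) : ∃ z : ℂˣ, z ^ n = c := by
  have key : ∀ (c : ℂˣ) (m : ℕ), m ≠ 0 → ∃ z : ℂˣ, z ^ (m : ℤ) = c := by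
    intro c m hm
    obtain ⟨z, hz⟩ := IsAlgClosed.exists_pow_nat_eq (c : ℂ) (Nat.pos_of_ne_zero hm)
    have hz0 : z ≠ 0 := by
      rintro rfl
      simp [zero_pow hm] at hz
      exact c.ne_zero hz.symm
    refine ⟨Units.mk0 z hz0, ?_⟩
    ext
    simp [hz]
  rcases n with (m | m)
  · exact key c m (fun h => hn (by simp [h, Int.ofNat_eq_natCast]))
  · obtain ⟨z, hz⟩ := key c⁻¹ (m + 1) (Nat.succ_ne_zero m)
    rw [zpow_natCast] at hz
    exact ⟨z, by rw [zpow_negSucc, hz, inv_inv]⟩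

/-- `ℂˣ` (written additively) is a divisible group. -/
noncomputable instance : DivisibleBy (Additive ℂˣ) ℤ where
  div a n := if hn : n = 0 then 0 else Additive.ofMul (exists_zpow_eq a.toMul hn).choose
  div_zero _ := dif_pos rfl
  div_cancel a hn := by
    simp only [dif_neg hn]
    have := (exists_zpow_eq a.toMul hn).choose_spec
    apply Additive.toMul.injective
    simpa using this

/-- A rearrangement identity in a commutative group. -/
lemma comm_group_rearrange {M : Type*} [CommGroup M] {A B C D a b c d : M}
    (h : D * B⁻¹ * C * A⁻¹ = d * b⁻¹ * c * a⁻¹) :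
    A * a⁻¹ * (B * b⁻¹) = C * c⁻¹ * (D * d⁻¹) := by
  have h' : (D * C) / (B * A) = (d * c) / (b * a) := by
    rw [div_eq_mul_inv, div_eq_mul_inv, mul_inv, mul_inv]
    simpa [mul_assoc, mul_comm, mul_left_comm] using h
  rw [div_eq_div_iff_mul_eq_mul] at h'
  rw [show A * a⁻¹ * (B * b⁻¹) = (A * B) / (a * b) by
        rw [div_eq_mul_inv, mul_inv]; simp [mul_assoc, mul_comm, mul_left_comm],
      show C * c⁻¹ * (D * d⁻¹) = (C * D) / (c * d) by
        rw [div_eq_mul_inv, mul_inv]; simp [mul_assoc, mul_comm, mul_left_comm],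
      div_eq_div_iff_mul_eq_mul]
  simpa [mul_comm, mul_left_comm, mul_assoc] using h'.symm

lemma constUnits_injective : Function.Injective constUnits :=
  Units.map_injective (f := (algebraMap ℂ (RatFunc ℂ)).toMonoidHom)
    (algebraMap ℂ (RatFunc ℂ)).injective

/-- Since `ℂˣ` is divisible (hence injective), the inclusion `ℂˣ ↪ ℂ(t)ˣ` splits:
there is a multiplicative retraction. -/
lemma exists_retraction : ∃ r : (RatFunc ℂ)ˣ →* ℂˣ, ∀ x : ℂˣ, r (constUnits x) = x := by
  obtain ⟨π, hπ⟩ := Module.Baer.extension_property_addMonoidHom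
    (Module.Baer.of_divisible (Additive ℂˣ))
    (MonoidHom.toAdditive constUnits) constUnits_injective (AddMonoidHom.id _)
  refine ⟨MonoidHom.toAdditive.symm π, fun x => ?_⟩
  exact congrArg Additive.toMul (DFunLike.congr_fun hπ (Additive.ofMul x))

/-- If `f : G × G → ℂ(t)ˣ` has constant associator, i.e.
`f(b,c)·f(a+b,c)⁻¹·f(a,b+c)·f(a,b)⁻¹ ∈ ℂˣ` for all `a,b,c`, then `f` can be rescaled by
constants `s(a,b) ∈ ℂˣ` so that `g(a,b) := f(a,b)·s(a,b)⁻¹` satisfies the 2-cocycle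
condition `g(a,b)·g(a+b,c) = g(a,b+c)·g(b,c)`. -/
theorem rescale_to_cocycle
    (G : Type) [AddCommGroup G] [Fintype G]
    (f : G → G → (RatFunc ℂ)ˣ)
    (hconst : ∀ a b c : G, ∃ d : ℂˣ,
      f b c * (f (a + b) c)⁻¹ * f a (b + c) * (f a b)⁻¹ = constUnits d) :
    ∃ s : G → G → ℂˣ, ∀ a b c : G,
      (f a b * (constUnits (s a b))⁻¹) * (f (a + b) c * (constUnits (s (a + b) c))⁻¹) =
        (f a (b + c) * (constUnits (s a (b + c)))⁻¹) *
          (f b c * (constUnits (s b c))⁻¹) := by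
  obtain ⟨r, hr⟩ := exists_retraction
  refine ⟨fun a b => r (f a b), fun a b c => ?_⟩
  obtain ⟨d, hd⟩ := hconst a b c
  apply comm_group_rearrange
  rw [hd]
  have hs : r (f b c) * (r (f (a + b) c))⁻¹ * r (f a (b + c)) * (r (f a b))⁻¹ = d := by
    have h2 := congrArg r hd
    simpa [map_mul, map_inv, hr] using h2
  rw [← hs]
  simp [map_mul, map_inv]
end
end

section
/- Let P, V, R be finite sets with |P| ≥ 2, let π : V → P be a surjective map, and let μ : V → ℤ assign to each v ∈ V a positive integer μ(v). Work in ℚ^{V⊔R} with standard basis vectors e(v), e(ρ), define for each p ∈ P the polytope Δ_p^c := conv{ e(v)/μ(v) : v ∈ π⁻¹(p) }, and set σ := ℚ_{≥0}·(∑_{p∈P} Δ_p^c) + ℚ^R_{≥0} (Minkowski sum). Fix p₀ ∈ P. Then for a componentwise-nonnegative vector x ∈ ℚ^{V⊔R}, the conditions that the weighted fiber sums ∑_{v ∈ π⁻¹(q)} μ(v)·x_v take a common value c for all q ≠ p₀ while ∑_{v ∈ π⁻¹(p₀)} μ(v)·x_v = c + 1, hold if and only if x ∈ Δ_{p₀}^c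 + σ. In other words, Δ_{p₀}^c + σ = Q⁻¹(ē(p₀)) ∩ ℚ^{V⊔R}_{≥0}, where Q : ℚ^{V⊔R} → ℚ^P/ℚ·(1,…,1) is the linear map with Q(e(v)) = μ(v)·ē(π(v)) and Q(e(ρ)) = 0. -/
open Finset

/-!
Each weighted fiber sum `x ↦ ∑_{π v = q} μ(v) x_v` is linear and equals `[p = q]` on `Δ_p^c`,
so it equals `[p₀ = q] + λ` on `Δ_{p₀}^c + λ ∑_p Δ_p^c + ℚ^W_{≥0}`. Conversely, the part of a
nonnegative `x` supported on the fiber over `p` is `s_p • y_p` with `y_p ∈ Δ_p^c` and `s_p` its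
fiber sum; with `s_p = c + [p = p₀]` this writes `x = y_{p₀} + c ∑_p y_p + x|_W`.
-/

section FiberSimplex

variable {𝕜 : Type*} [Field 𝕜] {P V W : Type*} [DecidableEq P] (π : V → P) (μ : V → ℕ)

def fiberPart (p : P) (x : V ⊕ W → 𝕜) : V ⊕ W → 𝕜 :=
  Sum.elim (fun v => if π v = p then x (Sum.inl v) else 0) 0

theorem fiberPart_smul (p : P) (a : 𝕜) (x : V ⊕ W → 𝕜) :
    fiberPart π p (a • x) = a • fiberPart π p x := by
  ext (v | w) <;> simp [fiberPart]

theorem sum_fiberPart_add_elim_inr [Fintype P] (x : V ⊕ W → 𝕜) :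
    x = ∑ p, fiberPart π p x + Sum.elim (0 : V → 𝕜) (x ∘ Sum.inr) := by
  ext (v | w) <;> simp [fiberPart, Finset.sum_apply]

variable [Fintype V]

def fiberSum (q : P) : (V ⊕ W → 𝕜) →ₗ[𝕜] 𝕜 where
  toFun x := ∑ v ∈ univ.filter (fun v => π v = q), (μ v : 𝕜) * x (Sum.inl v)
  map_add' x y := by simp only [Pi.add_apply, mul_add, sum_add_distrib]
  map_smul' a x := by simp only [Pi.smul_apply, smul_eq_mul, RingHom.id_apply, mul_sum,
    mul_left_comm]

@[simp]
theorem fiberSum_apply (q : P) (x : V ⊕ W → 𝕜) :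
    fiberSum π μ q x = ∑ v ∈ univ.filter (fun v => π v = q), (μ v : 𝕜) * x (Sum.inl v) :=
  rfl

section Vertex

variable [CharZero 𝕜] [DecidableEq V] [DecidableEq W]

def fiberVertex (v : V) : V ⊕ W → 𝕜 := (μ v : 𝕜)⁻¹ • Pi.single (Sum.inl v) 1

variable {π μ}

theorem fiberSum_fiberVertex {v : V} (hv : μ v ≠ 0) (q : P) :
    fiberSum π μ q (fiberVertex μ v : V ⊕ W → 𝕜) = if π v = q then 1 else 0 := by
  have hv' : (μ v : 𝕜) ≠ 0 := Nat.cast_ne_zero.mpr hv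
  simp [fiberVertex, Pi.single_apply, hv']

theorem fiberPart_eq_sum_smul_fiberVertex (hμ : ∀ v, μ v ≠ 0) (p : P) (x : V ⊕ W → 𝕜) :
    fiberPart π p x =
      ∑ v ∈ univ.filter (fun v => π v = p), ((μ v : 𝕜) * x (Sum.inl v)) • fiberVertex μ v := by
  have hsingle : ∀ v, ((μ v : 𝕜) * x (Sum.inl v)) • (fiberVertex μ v : V ⊕ W → 𝕜) =
      Pi.single (Sum.inl v) (x (Sum.inl v)) := fun v => by
    rw [fiberVertex, smul_smul, mul_right_comm, mul_inv_cancel₀ (Nat.cast_ne_zero.mpr (hμ v)),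
      one_mul, ← Pi.single_smul', smul_eq_mul, mul_one]
  simp_rw [hsingle]
  ext (v | w) <;> simp [fiberPart, Finset.sum_apply, Pi.single_apply, eq_comm]

end Vertex

variable {π μ}

theorem fiberSum_eq_zero_of_forall_inl {z : V ⊕ W → 𝕜} (hz : ∀ v, z (Sum.inl v) = 0) (q : P) :
    fiberSum π μ q z = 0 := by
  simp [hz]

variable [LinearOrder 𝕜] [IsStrictOrderedRing 𝕜]

theorem fiberSum_nonneg {x : V ⊕ W → 𝕜} (hx : ∀ i, 0 ≤ x i) (q : P) : 0 ≤ fiberSum π μ q x :=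
  sum_nonneg fun _ _ => mul_nonneg (Nat.cast_nonneg _) (hx _)

theorem fiberPart_eq_zero_of_fiberSum_eq_zero (hμ : ∀ v, μ v ≠ 0) {p : P} {x : V ⊕ W → 𝕜}
    (hx : ∀ i, 0 ≤ x i) (h : fiberSum π μ p x = 0) : fiberPart π p x = 0 := by
  have hterms := (sum_eq_zero_iff_of_nonneg fun v _ =>
    mul_nonneg (Nat.cast_nonneg (μ v)) (hx (Sum.inl v))).mp h
  ext (v | w)
  · by_cases hv : π v = p
    · simpa [fiberPart, hv, hμ v] using hterms v (by simp [hv])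
    · simp [fiberPart, hv]
  · rfl

variable [DecidableEq V] [DecidableEq W]

variable (π μ) in
/-- The polytope `Δ_p^c`. -/
def fiberSimplex (p : P) : Set (V ⊕ W → 𝕜) := convexHull 𝕜 (fiberVertex μ '' {v | π v = p})

theorem fiberSum_eq_of_mem_fiberSimplex (hμ : ∀ v, μ v ≠ 0) {p : P} {y : V ⊕ W → 𝕜}
    (hy : y ∈ fiberSimplex π μ p) (q : P) : fiberSum π μ q y = if p = q then 1 else 0 := by
  refine convexHull_min ?_ (convex_hyperplane (fiberSum π μ q).isLinear _) hy
  rintro _ ⟨v, rfl, rfl⟩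
  exact fiberSum_fiberVertex (hμ v) q

theorem fiberPart_mem_fiberSimplex (hμ : ∀ v, μ v ≠ 0) {p : P} {x : V ⊕ W → 𝕜}
    (hx : ∀ i, 0 ≤ x i) (h : fiberSum π μ p x = 1) : fiberPart π p x ∈ fiberSimplex π μ p := by
  rw [fiberPart_eq_sum_smul_fiberVertex hμ]
  refine (convex_convexHull 𝕜 _).sum_mem (fun v _ => mul_nonneg (Nat.cast_nonneg _) (hx _)) h ?_
  intro v hv
  exact subset_convexHull 𝕜 _ ⟨v, (mem_filter.mp hv).2, rfl⟩

theorem exists_mem_fiberSimplex_fiberPart_eq_smul (hμ : ∀ v, μ v ≠ 0) {p : P}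
    (hp : ∃ v, π v = p) {x : V ⊕ W → 𝕜} (hx : ∀ i, 0 ≤ x i) :
    ∃ y ∈ fiberSimplex π μ p, fiberPart π p x = fiberSum π μ p x • y := by
  by_cases h : fiberSum π μ p x = 0
  · obtain ⟨v, rfl⟩ := hp
    refine ⟨fiberVertex μ v, subset_convexHull 𝕜 _ ⟨v, rfl, rfl⟩, ?_⟩
    rw [h, zero_smul, fiberPart_eq_zero_of_fiberSum_eq_zero hμ hx h]
  · set s := fiberSum π μ p x
    have hs : 0 ≤ s⁻¹ := inv_nonneg.mpr (fiberSum_nonneg hx p)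
    refine ⟨fiberPart π p (s⁻¹ • x), fiberPart_mem_fiberSimplex hμ
      (fun i => mul_nonneg hs (hx i)) ?_, ?_⟩
    · rw [map_smul, smul_eq_mul, inv_mul_cancel₀ h]
    · rw [fiberPart_smul, smul_smul, mul_inv_cancel₀ h, one_smul]

end FiberSimplex

theorem coefficient_polyhedron_eq_fiber_sums_general
    (P V W : Type) [Fintype P] [Fintype V]
    [DecidableEq P] [DecidableEq V] [DecidableEq W]
    (hP : 2 ≤ Fintype.card P)
    (π : V → P) (hπ : Function.Surjective π)
    (μ : V → ℕ) (hμ : ∀ v, 0 < μ v)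
    (p₀ : P)
    (x : V ⊕ W → ℚ) (hx : ∀ i, 0 ≤ x i) :
    (∃ c : ℚ,
        (∀ q : P, q ≠ p₀ →
          (∑ v ∈ univ.filter (fun v => π v = q), (μ v : ℚ) * x (Sum.inl v)) = c) ∧
        (∑ v ∈ univ.filter (fun v => π v = p₀), (μ v : ℚ) * x (Sum.inl v)) = c + 1) ↔
      (∃ (y₀ : V ⊕ W → ℚ) (lam : ℚ) (y : P → (V ⊕ W → ℚ)) (z : V ⊕ W → ℚ),
        y₀ ∈ convexHull ℚ
          ((fun v : V => (μ v : ℚ)⁻¹ • (Pi.single (Sum.inl v) 1 : V ⊕ W → ℚ)) ''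
            {v : V | π v = p₀}) ∧
        0 ≤ lam ∧
        (∀ p : P, y p ∈ convexHull ℚ
          ((fun v : V => (μ v : ℚ)⁻¹ • (Pi.single (Sum.inl v) 1 : V ⊕ W → ℚ)) ''
            {v : V | π v = p})) ∧
        (∀ i, 0 ≤ z i) ∧ (∀ v : V, z (Sum.inl v) = 0) ∧
        x = y₀ + lam • (∑ p : P, y p) + z) := by
  have hμ : ∀ v, μ v ≠ 0 := fun v => (hμ v).ne'
  constructor
  · rintro ⟨c, hc, hc₀⟩
    have hsum : ∀ p, fiberSum π μ p x = c + if p = p₀ then 1 else 0 := fun p => by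
      by_cases hp : p = p₀
      · simpa [hp] using hc₀
      · simpa [hp] using hc p hp
    have hc_nonneg : 0 ≤ c := by
      obtain ⟨q₁, hq₁⟩ := Fintype.exists_ne_of_one_lt_card hP p₀
      rw [← hc q₁ hq₁]
      exact fiberSum_nonneg hx q₁
    choose y hy hxy using fun p => exists_mem_fiberSimplex_fiberPart_eq_smul hμ (hπ p) hx
    set z := Sum.elim (0 : V → ℚ) (x ∘ Sum.inr)
    refine ⟨y p₀, c, y, z, hy p₀, hc_nonneg, hy, by rintro (v | w) <;> simp [z, hx],
      fun _ => rfl, ?_⟩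
    calc x = ∑ p, fiberPart π p x + z := sum_fiberPart_add_elim_inr π x
      _ = ∑ p, (c + if p = p₀ then 1 else 0) • y p + z := by simp_rw [hxy, hsum]
      _ = y p₀ + c • ∑ p, y p + z := by
        simp only [add_smul, sum_add_distrib, ite_smul, one_smul, zero_smul, sum_ite_eq',
          mem_univ, if_true, smul_sum]
        abel
  · rintro ⟨y₀, lam, y, z, hy₀, -, hy, -, hz, rfl⟩
    have hsum : ∀ q, fiberSum π μ q (y₀ + lam • ∑ p, y p + z) = lam + if p₀ = q then 1 else 0 :=
      fun q => by
        simp only [map_add, map_smul, map_sum, fiberSum_eq_of_mem_fiberSimplex hμ hy₀,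
          fiberSum_eq_of_mem_fiberSimplex hμ (hy _), fiberSum_eq_zero_of_forall_inl hz,
          sum_ite_eq', mem_univ, if_true, smul_eq_mul, mul_one, add_zero]
        ring
    exact ⟨lam, fun q hq => by simpa [Ne.symm hq] using hsum q, by simpa [add_comm] using hsum p₀⟩

/-- With `Δ_p^c = conv{e(v)/μ(v) : π(v) = p}` in `ℚ^{V⊔W}` and
`σ = ℚ_{≥0}·(∑_p Δ_p^c) + ℚ^W_{≥0}`, and `p₀ ∈ P` fixed (`|P| ≥ 2`), a
componentwise-nonnegative vector `x` satisfies: the weighted fiber sums over `q ≠ p₀`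
take a common value `c` while the fiber sum over `p₀` equals `c + 1`, if and only if
`x ∈ Δ_{p₀}^c + σ`; i.e. `Δ_{p₀}^c + σ = Q⁻¹(ē(p₀)) ∩ ℚ^{V⊔W}_{≥0}`. -/
theorem coefficient_polyhedron_eq_fiber_sums
    (P V W : Type) [Fintype P] [Fintype V] [Fintype W]
    [DecidableEq P] [DecidableEq V] [DecidableEq W]
    (hP : 2 ≤ Fintype.card P)
    (π : V → P) (hπ : Function.Surjective π)
    (μ : V → ℕ) (hμ : ∀ v, 0 < μ v)
    (p₀ : P)
    (x : V ⊕ W → ℚ) (hx : ∀ i, 0 ≤ x i) :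
    (∃ c : ℚ,
        (∀ q : P, q ≠ p₀ →
          (∑ v ∈ univ.filter (fun v => π v = q), (μ v : ℚ) * x (Sum.inl v)) = c) ∧
        (∑ v ∈ univ.filter (fun v => π v = p₀), (μ v : ℚ) * x (Sum.inl v)) = c + 1) ↔
      (∃ (y₀ : V ⊕ W → ℚ) (lam : ℚ) (y : P → (V ⊕ W → ℚ)) (z : V ⊕ W → ℚ),
        y₀ ∈ convexHull ℚ
          ((fun v : V => (μ v : ℚ)⁻¹ • (Pi.single (Sum.inl v) 1 : V ⊕ W → ℚ)) ''
            {v : V | π v = p₀}) ∧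
        0 ≤ lam ∧
        (∀ p : P, y p ∈ convexHull ℚ
          ((fun v : V => (μ v : ℚ)⁻¹ • (Pi.single (Sum.inl v) 1 : V ⊕ W → ℚ)) ''
            {v : V | π v = p})) ∧
        (∀ i, 0 ≤ z i) ∧ (∀ v : V, z (Sum.inl v) = 0) ∧
        x = y₀ + lam • (∑ p : P, y p) + z) :=
  coefficient_polyhedron_eq_fiber_sums_general P V W hP π hπ μ hμ p₀ x hx
end
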